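/- Under the discrete-time Demidovich criterion — there exist symmetric positive definite P and μ ∈ (0,1) with (∂f/∂x)(x,u)ᵀ P (∂f/∂x)(x,u) ⪯ μ P for all x in a convex positively invariant set X and u ∈ U — the system x_{t+1} = f(x_t, u_t) is uniformly exponentially incrementally stable with β(C, t) = √κ(P) · C · μ^{t/2}: ‖φ^u_{s,t}(ξ) − φ^u_{s,t}(ξ')‖ ≤ √κ(P) ‖ξ − ξ'‖ μ^{(t−s)/2} for all inputs u valued in U, ξ, ξ' ∈ X, 0 ≤ s ≤ t. -/

import Mathlib

/-!
Factor `P = BᴴB`, so that `v ↦ ‖B v‖` is the norm induced by `P`. The Loewner inequality says that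
every Jacobian `J(x, u)` is a `√μ`-contraction for this norm, so by the mean value inequality on
the convex set `X` each map `f(·, u)` is a `√μ`-contraction of `X` in this norm, and iterating along
trajectories, which stay in `X`, gives the factor `√μ ^ (t - s)`. Comparing the `P`-norm with the
Euclidean norm through the extreme eigenvalues of `P` costs the factor `√κ(P)`.
-/

open Matrix

def phi {α : Type*} (f : α → ℝ → α) (u : ℕ → ℝ) (s : ℕ) (ξ : α) : ℕ → α
  | 0 => ξ
  | k + 1 => f (phi f u s ξ k) (u (s + k))

open scoped RealInnerProductSpace

theorem Real.le_sqrt_mul_of_sq_le_mul_sq {x y c : ℝ} (hx : 0 ≤ x) (hy : 0 ≤ y)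
    (h : x ^ 2 ≤ c * y ^ 2) : x ≤ √c * y :=
  calc x = √(x ^ 2) := (Real.sqrt_sq hx).symm
    _ ≤ √(c * y ^ 2) := Real.sqrt_le_sqrt h
    _ = √c * y := by rw [Real.sqrt_mul' c (sq_nonneg y), Real.sqrt_sq hy]

theorem Real.sqrt_mul_le_of_mul_sq_le_sq {x y c : ℝ} (hx : 0 ≤ x) (hy : 0 ≤ y)
    (h : c * y ^ 2 ≤ x ^ 2) : √c * y ≤ x :=
  calc √c * y = √(c * y ^ 2) := by rw [Real.sqrt_mul' c (sq_nonneg y), Real.sqrt_sq hy]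
    _ ≤ √(x ^ 2) := Real.sqrt_le_sqrt h
    _ = x := Real.sqrt_sq hx

theorem Convex.norm_image_sub_le_of_norm_fderiv_apply_le {E F : Type*} [NormedAddCommGroup E]
    [NormedSpace ℝ E] [NormedAddCommGroup F] [NormedSpace ℝ F] {f : E → F}
    {f' : E → E →L[ℝ] F} {s : Set E} {x y : E} {C : ℝ} (hs : Convex ℝ s)
    (hf : ∀ z ∈ s, HasFDerivWithinAt f (f' z) s z) (bound : ∀ z ∈ s, ‖f' z (y - x)‖ ≤ C)
    (hx : x ∈ s) (hy : y ∈ s) : ‖f y - f x‖ ≤ C := by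
  set γ := (AffineMap.lineMap x y : ℝ → E)
  have hγ : Set.MapsTo γ (Set.Icc 0 1) s := hs.mapsTo_lineMap hx hy
  have hderiv : ∀ θ ∈ Set.Icc (0 : ℝ) 1,
      HasDerivWithinAt (f ∘ γ) (f' (γ θ) (y - x)) (Set.Icc 0 1) θ := fun θ hθ => by
    simpa using (hf (γ θ) (hγ hθ)).comp_hasDerivWithinAt θ
      AffineMap.hasDerivWithinAt_lineMap hγ
  simpa [γ] using norm_image_sub_le_of_norm_deriv_le_segment_01' hderiv
    fun θ hθ => bound _ (hγ (Set.Ico_subset_Icc_self hθ))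

namespace Matrix

variable {ι : Type*} [Fintype ι] [DecidableEq ι]

theorem PosSemidef.exists_eq_conjTranspose_mul_self {P : Matrix ι ι ℝ} (hP : P.PosSemidef) :
    ∃ B : Matrix ι ι ℝ, P = Bᴴ * B := by
  open scoped MatrixOrder in
  exact CStarAlgebra.nonneg_iff_eq_star_mul_self.mp hP.nonneg

theorem PosDef.iInf_eigenvalues_pos [Nonempty ι] {P : Matrix ι ι ℝ} (hP : P.PosDef) :
    0 < ⨅ i, hP.1.eigenvalues i := by
  obtain ⟨i, hi⟩ := exists_eq_ciInf_of_finite (f := hP.1.eigenvalues)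
  exact hi ▸ hP.eigenvalues_pos i

theorem PosSemidef.inner_toEuclideanCLM_self_nonneg {A : Matrix ι ι ℝ} (hA : A.PosSemidef)
    (v : EuclideanSpace ℝ ι) : 0 ≤ ⟪v, toEuclideanCLM (𝕜 := ℝ) A v⟫ := by
  simpa [inner_toEuclideanCLM] using hA.dotProduct_mulVec_nonneg v.ofLp

theorem inner_toEuclideanCLM_conjTranspose_mul_mul (J P : Matrix ι ι ℝ)
    (v : EuclideanSpace ℝ ι) :
    ⟪v, toEuclideanCLM (𝕜 := ℝ) (Jᴴ * P * J) v⟫ =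
      ⟪toEuclideanCLM (𝕜 := ℝ) J v, toEuclideanCLM (𝕜 := ℝ) P (toEuclideanCLM (𝕜 := ℝ) J v)⟫ := by
  rw [map_mul, map_mul, mul_apply_eq_comp, mul_apply_eq_comp, ← star_eq_conjTranspose, map_star,
    ContinuousLinearMap.star_eq_adjoint, ContinuousLinearMap.adjoint_inner_right]

theorem norm_toEuclideanCLM_apply_sq (B : Matrix ι ι ℝ) (v : EuclideanSpace ℝ ι) :
    ‖toEuclideanCLM (𝕜 := ℝ) B v‖ ^ 2 = ⟪v, toEuclideanCLM (𝕜 := ℝ) (Bᴴ * B) v⟫ := by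
  simpa using (inner_toEuclideanCLM_conjTranspose_mul_mul B 1 v).symm

theorem IsHermitian.inner_toEuclideanCLM_self_eq_sum {A : Matrix ι ι ℝ} (hA : A.IsHermitian)
    (v : EuclideanSpace ℝ ι) :
    ⟪v, toEuclideanCLM (𝕜 := ℝ) A v⟫ = ∑ i, hA.eigenvalues i * ⟪hA.eigenvectorBasis i, v⟫ ^ 2 := by
  rw [← hA.eigenvectorBasis.sum_inner_mul_inner v]
  refine Finset.sum_congr rfl fun i _ => ?_
  have heigen : toEuclideanCLM (𝕜 := ℝ) A (hA.eigenvectorBasis i) =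
      hA.eigenvalues i • hA.eigenvectorBasis i := by
    ext1 j
    simpa using congrFun (hA.mulVec_eigenvectorBasis i) j
  have hsymm : ⟪hA.eigenvectorBasis i, toEuclideanCLM (𝕜 := ℝ) A v⟫ =
      ⟪toEuclideanCLM (𝕜 := ℝ) A (hA.eigenvectorBasis i), v⟫ :=
    (isSymmetric_toEuclideanLin_iff.mpr hA _ _).symm
  rw [hsymm, heigen, real_inner_smul_left, real_inner_comm v]
  ring

theorem IsHermitian.iInf_eigenvalues_mul_norm_sq_le {A : Matrix ι ι ℝ} (hA : A.IsHermitian)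
    (v : EuclideanSpace ℝ ι) :
    (⨅ i, hA.eigenvalues i) * ‖v‖ ^ 2 ≤ ⟪v, toEuclideanCLM (𝕜 := ℝ) A v⟫ := by
  rw [hA.inner_toEuclideanCLM_self_eq_sum, ← hA.eigenvectorBasis.sum_sq_inner_right, Finset.mul_sum]
  gcongr with i
  exact ciInf_le (Set.finite_range _).bddBelow i

theorem IsHermitian.inner_toEuclideanCLM_self_le_iSup_eigenvalues_mul_norm_sq {A : Matrix ι ι ℝ}
    (hA : A.IsHermitian) (v : EuclideanSpace ℝ ι) :
    ⟪v, toEuclideanCLM (𝕜 := ℝ) A v⟫ ≤ (⨆ i, hA.eigenvalues i) * ‖v‖ ^ 2 := by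
  rw [hA.inner_toEuclideanCLM_self_eq_sum, ← hA.eigenvectorBasis.sum_sq_inner_right, Finset.mul_sum]
  gcongr with i
  exact le_ciSup (Set.finite_range _).bddAbove i

variable {P B : Matrix ι ι ℝ}

theorem sqrt_iInf_eigenvalues_mul_norm_le (hPB : P = Bᴴ * B) (hP : P.IsHermitian)
    (v : EuclideanSpace ℝ ι) : √(⨅ i, hP.eigenvalues i) * ‖v‖ ≤ ‖toEuclideanCLM (𝕜 := ℝ) B v‖ := by
  refine Real.sqrt_mul_le_of_mul_sq_le_sq (norm_nonneg _) (norm_nonneg _) ?_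
  rw [norm_toEuclideanCLM_apply_sq, ← hPB]
  exact hP.iInf_eigenvalues_mul_norm_sq_le v

theorem norm_toEuclideanCLM_le_sqrt_iSup_eigenvalues_mul (hPB : P = Bᴴ * B) (hP : P.IsHermitian)
    (v : EuclideanSpace ℝ ι) : ‖toEuclideanCLM (𝕜 := ℝ) B v‖ ≤ √(⨆ i, hP.eigenvalues i) * ‖v‖ := by
  refine Real.le_sqrt_mul_of_sq_le_mul_sq (norm_nonneg _) (norm_nonneg _) ?_
  rw [norm_toEuclideanCLM_apply_sq, ← hPB]
  exact hP.inner_toEuclideanCLM_self_le_iSup_eigenvalues_mul_norm_sq v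

theorem norm_toEuclideanCLM_apply_le_of_posSemidef_sub {J : Matrix ι ι ℝ} {μ : ℝ}
    (hPB : P = Bᴴ * B) (hJ : (μ • P - Jᵀ * P * J).PosSemidef) (v : EuclideanSpace ℝ ι) :
    ‖toEuclideanCLM (𝕜 := ℝ) B (toEuclideanCLM (𝕜 := ℝ) J v)‖ ≤
      √μ * ‖toEuclideanCLM (𝕜 := ℝ) B v‖ := by
  have h := hJ.inner_toEuclideanCLM_self_nonneg v
  rw [map_sub, map_smul, _root_.sub_apply, _root_.smul_apply,
    inner_sub_right, real_inner_smul_right, ← conjTranspose_eq_transpose_of_trivial,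
    inner_toEuclideanCLM_conjTranspose_mul_mul, hPB, ← norm_toEuclideanCLM_apply_sq,
    ← norm_toEuclideanCLM_apply_sq] at h
  exact Real.le_sqrt_mul_of_sq_le_mul_sq (norm_nonneg _) (norm_nonneg _) (by linarith)

theorem norm_toEuclideanCLM_image_sub_le_of_posSemidef_sub
    {g : EuclideanSpace ℝ ι → EuclideanSpace ℝ ι} {J : EuclideanSpace ℝ ι → Matrix ι ι ℝ}
    {s : Set (EuclideanSpace ℝ ι)} {μ : ℝ} {x y : EuclideanSpace ℝ ι} (hs : Convex ℝ s)
    (hg : ∀ z ∈ s, HasFDerivAt g (toEuclideanCLM (𝕜 := ℝ) (J z)) z) (hPB : P = Bᴴ * B)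
    (hJ : ∀ z ∈ s, (μ • P - (J z)ᵀ * P * J z).PosSemidef) (hx : x ∈ s) (hy : y ∈ s) :
    ‖toEuclideanCLM (𝕜 := ℝ) B (g x - g y)‖ ≤ √μ * ‖toEuclideanCLM (𝕜 := ℝ) B (x - y)‖ := by
  have hBg : ∀ z ∈ s, HasFDerivWithinAt (fun w => toEuclideanCLM (𝕜 := ℝ) B (g w))
      ((toEuclideanCLM (𝕜 := ℝ) B).comp (toEuclideanCLM (𝕜 := ℝ) (J z))) s z := fun z hz =>
    ((toEuclideanCLM (𝕜 := ℝ) B).hasFDerivAt.comp z (hg z hz)).hasFDerivWithinAt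
  have h := hs.norm_image_sub_le_of_norm_fderiv_apply_le hBg
    (fun z hz => norm_toEuclideanCLM_apply_le_of_posSemidef_sub hPB (hJ z hz) (x - y)) hy hx
  rwa [← map_sub] at h

end Matrix

section Trajectory

variable {α : Type*} {f : α → ℝ → α} {u : ℕ → ℝ} {X : Set α} {U : Set ℝ}

theorem phi_mem (hInv : ∀ x ∈ X, ∀ a ∈ U, f x a ∈ X) (hu : ∀ k, u k ∈ U) (s : ℕ) {ξ : α}
    (hξ : ξ ∈ X) : ∀ k, phi f u s ξ k ∈ X
  | 0 => hξ
  | k + 1 => hInv _ (phi_mem hInv hu s hξ k) _ (hu _)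

theorem phi_incremental_le_pow_mul (d : α → α → ℝ) {c : ℝ} (hc : 0 ≤ c)
    (hstep : ∀ x ∈ X, ∀ y ∈ X, ∀ a ∈ U, d (f x a) (f y a) ≤ c * d x y)
    (hInv : ∀ x ∈ X, ∀ a ∈ U, f x a ∈ X) (hu : ∀ k, u k ∈ U) (s : ℕ) {ξ ξ' : α} (hξ : ξ ∈ X)
    (hξ' : ξ' ∈ X) : ∀ k, d (phi f u s ξ k) (phi f u s ξ' k) ≤ c ^ k * d ξ ξ'
  | 0 => by simp [phi]
  | k + 1 =>
    calc d (phi f u s ξ (k + 1)) (phi f u s ξ' (k + 1))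
        ≤ c * d (phi f u s ξ k) (phi f u s ξ' k) :=
          hstep _ (phi_mem hInv hu s hξ k) _ (phi_mem hInv hu s hξ' k) _ (hu _)
      _ ≤ c * (c ^ k * d ξ ξ') := by
          gcongr; exact phi_incremental_le_pow_mul d hc hstep hInv hu s hξ hξ' k
      _ = c ^ (k + 1) * d ξ ξ' := by ring

end Trajectory

theorem demidovich_exponential_incremental_stability_general {n : ℕ}
    (f : EuclideanSpace ℝ (Fin n) → ℝ → EuclideanSpace ℝ (Fin n))
    (X : Set (EuclideanSpace ℝ (Fin n))) (U : Set ℝ)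
    (hX : Convex ℝ X)
    -- `X` is positively invariant for inputs valued in `U`
    (hInv : ∀ x ∈ X, ∀ u ∈ U, f x u ∈ X)
    (J : EuclideanSpace ℝ (Fin n) → ℝ → Matrix (Fin n) (Fin n) ℝ)
    (P : Matrix (Fin n) (Fin n) ℝ) (hP : P.PosDef)
    (μ : ℝ)
    -- `f(·,u)` is differentiable in `x` on `X` with Jacobian `J(x,u)`
    (hder : ∀ x ∈ X, ∀ u ∈ U,
      HasFDerivAt (fun y => f y u) (Matrix.toEuclideanCLM (𝕜 := ℝ) (J x u)) x)
    -- Loewner inequality `J(x,u)ᵀ P J(x,u) ⪯ μ P`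
    (hLoewner : ∀ x ∈ X, ∀ u ∈ U, (μ • P - (J x u)ᵀ * P * (J x u)).PosSemidef) :
    ∀ u : ℕ → ℝ, (∀ k, u k ∈ U) → ∀ ξ ∈ X, ∀ ξ' ∈ X, ∀ s t : ℕ, s ≤ t →
      ‖phi f u s ξ (t - s) - phi f u s ξ' (t - s)‖ ≤
        Real.sqrt ((⨆ i, hP.1.eigenvalues i) / (⨅ i, hP.1.eigenvalues i)) *
          ‖ξ - ξ'‖ * Real.sqrt μ ^ (t - s) := by
  intro u hu ξ hξ ξ' hξ' s t _
  rcases isEmpty_or_nonempty (Fin n) with hn | hn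
  · rw [Subsingleton.elim (phi f u s ξ (t - s) - phi f u s ξ' (t - s)) 0, norm_zero]
    positivity
  obtain ⟨B, hPB⟩ := hP.posSemidef.exists_eq_conjTranspose_mul_self
  set S := toEuclideanCLM (𝕜 := ℝ) B
  have hstep : ∀ x ∈ X, ∀ y ∈ X, ∀ a ∈ U, ‖S (f x a - f y a)‖ ≤ √μ * ‖S (x - y)‖ :=
    fun x hx y hy a ha => by
      simpa only using norm_toEuclideanCLM_image_sub_le_of_posSemidef_sub (g := (f · a)) hX
        (fun z hz => hder z hz a ha) hPB (fun z hz => hLoewner z hz a ha) hx hy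
  have hmin := hP.iInf_eigenvalues_pos
  rw [Real.sqrt_div' _ hmin.le, div_mul_eq_mul_div, div_mul_eq_mul_div,
    le_div_iff₀ (Real.sqrt_pos.2 hmin), mul_comm]
  calc √(⨅ i, hP.1.eigenvalues i) * ‖phi f u s ξ (t - s) - phi f u s ξ' (t - s)‖
      ≤ ‖S (phi f u s ξ (t - s) - phi f u s ξ' (t - s))‖ :=
        sqrt_iInf_eigenvalues_mul_norm_le hPB hP.1 _
    _ ≤ √μ ^ (t - s) * ‖S (ξ - ξ')‖ :=
        phi_incremental_le_pow_mul (fun x y => ‖S (x - y)‖) (Real.sqrt_nonneg μ) hstep hInv hu s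
          hξ hξ' (t - s)
    _ ≤ √μ ^ (t - s) * (√(⨆ i, hP.1.eigenvalues i) * ‖ξ - ξ'‖) := by
        gcongr; exact norm_toEuclideanCLM_le_sqrt_iSup_eigenvalues_mul hPB hP.1 _
    _ = √(⨆ i, hP.1.eigenvalues i) * ‖ξ - ξ'‖ * √μ ^ (t - s) := by ring

/-- Discrete-time Demidovich criterion implies uniform exponential incremental stability:
`‖φ^u_{s,t}(ξ) − φ^u_{s,t}(ξ')‖ ≤ √κ(P) ‖ξ − ξ'‖ μ^{(t−s)/2}` for inputs valued in `U`,
`ξ, ξ' ∈ X`, `0 ≤ s ≤ t`, where `κ(P) = λ_max(P)/λ_min(P)`. -/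
theorem demidovich_exponential_incremental_stability {n : ℕ}
    (f : EuclideanSpace ℝ (Fin n) → ℝ → EuclideanSpace ℝ (Fin n))
    (X : Set (EuclideanSpace ℝ (Fin n))) (U : Set ℝ)
    (hX : Convex ℝ X)
    -- `X` is positively invariant for inputs valued in `U`
    (hInv : ∀ x ∈ X, ∀ u ∈ U, f x u ∈ X)
    (J : EuclideanSpace ℝ (Fin n) → ℝ → Matrix (Fin n) (Fin n) ℝ)
    (P : Matrix (Fin n) (Fin n) ℝ) (hP : P.PosDef)
    (μ : ℝ) (hμ : μ ∈ Set.Ioo (0 : ℝ) 1)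
    -- `f(·,u)` is differentiable in `x` on `X` with Jacobian `J(x,u)`
    (hder : ∀ x ∈ X, ∀ u ∈ U,
      HasFDerivAt (fun y => f y u) (Matrix.toEuclideanCLM (𝕜 := ℝ) (J x u)) x)
    -- Loewner inequality `J(x,u)ᵀ P J(x,u) ⪯ μ P`
    (hLoewner : ∀ x ∈ X, ∀ u ∈ U, (μ • P - (J x u)ᵀ * P * (J x u)).PosSemidef) :
    ∀ u : ℕ → ℝ, (∀ k, u k ∈ U) → ∀ ξ ∈ X, ∀ ξ' ∈ X, ∀ s t : ℕ, s ≤ t →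
      ‖phi f u s ξ (t - s) - phi f u s ξ' (t - s)‖ ≤
        Real.sqrt ((⨆ i, hP.1.eigenvalues i) / (⨅ i, hP.1.eigenvalues i)) *
          ‖ξ - ξ'‖ * Real.sqrt μ ^ (t - s) :=
  demidovich_exponential_incremental_stability_general f X U hX hInv J P hP μ hder hLoewner
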